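/- arXiv:1902.08492 — 5 statements merged into one kernel-verified Lean document; each statement's English description precedes it below -/
import Mathlib

section
/- Let H be a Hilbert space and T a bounded linear operator on H that is an m-isometry for some positive integer m. If Q is an n-nilpotent bounded operator on H commuting with T, then T + Q is a (2n + m - 2)-isometry. -/
open scoped BigOperators

/-- `T` is an `m`-isometry: `∑_{k=0}^m (-1)^{m-k} C(m,k) ‖T^k x‖² = 0` for all `x`. -/
def IsMIsometry {H : Type*} [NormedAddCommGroup H] [InnerProductSpace ℂ H]
    (m : ℕ) (T : H →L[ℂ] H) : Prop :=
  ∀ x : H, ∑ k ∈ Finset.range (m + 1),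
    (-1 : ℝ) ^ (m - k) * (m.choose k) * ‖(T ^ k) x‖ ^ 2 = 0

/-!
`T` is an `m`-isometry iff for every `x` the `m`-th forward difference of `k ↦ ‖T^k x‖²`
vanishes, i.e. iff this sequence is a polynomial in `k` of degree `< m`; by polarization the same
then holds for `k ↦ Re ⟪T^k u, T^k v⟫`. If `Q^n = 0` and `Q` commutes with `T`, then
`(T + Q)^k x = ∑_{i<n} C(k,i) T^(k-i) Q^i x`, so `‖(T + Q)^k x‖²` is a sum over `i, j < n` of
`C(k,i) C(k,j) Re ⟪T^(k-i) Q^i x, T^(k-j) Q^j x⟫`, a polynomial in `k` of degree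
`< i + j + m ≤ 2n + m - 2`.
-/

open Finset Polynomial
open scoped fwdDiff InnerProductSpace

noncomputable def polySeqLT (d : ℕ) : Submodule ℝ (ℕ → ℝ) :=
  (degreeLT ℝ d).map (LinearMap.pi fun k : ℕ => leval (k : ℝ))

lemma mem_polySeqLT {d : ℕ} {f : ℕ → ℝ} :
    f ∈ polySeqLT d ↔ ∃ P : ℝ[X], P.degree < d ∧ ∀ k : ℕ, P.eval (k : ℝ) = f k := by
  simp [polySeqLT, mem_degreeLT, funext_iff]

lemma polySeqLT_mono : Monotone polySeqLT :=
  fun _ _ h => Submodule.map_mono (degreeLT_mono h)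

lemma degree_lt_add_one_iff {R : Type*} [Semiring R] {P : R[X]} {a : ℕ} :
    P.degree < ↑(a + 1) ↔ P.degree ≤ a := by
  rw [← mem_degreeLT, degreeLT_succ_eq_degreeLE, mem_degreeLE]

lemma choose_mem_polySeqLT (i : ℕ) : (fun k : ℕ => (k.choose i : ℝ)) ∈ polySeqLT (i + 1) := by
  refine mem_polySeqLT.2 ⟨C (i.factorial : ℝ)⁻¹ * descPochhammer ℝ i, ?_, fun k => ?_⟩
  · rw [degree_lt_add_one_iff, degree_C_mul (by positivity),
      degree_eq_natDegree (monic_descPochhammer ℝ i).ne_zero, descPochhammer_natDegree]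
  · rw [Nat.cast_choose_eq_descPochhammer_div, eval_mul, eval_C, div_eq_inv_mul]

lemma mul_mem_polySeqLT {a b : ℕ} {f g : ℕ → ℝ} (hf : f ∈ polySeqLT (a + 1))
    (hg : g ∈ polySeqLT b) : f * g ∈ polySeqLT (a + b) := by
  obtain ⟨P, hP, hPf⟩ := mem_polySeqLT.1 hf
  obtain ⟨R, hR, hRg⟩ := mem_polySeqLT.1 hg
  refine mem_polySeqLT.2 ⟨P * R, ?_, fun k => by simp [hPf, hRg]⟩
  rcases eq_or_ne P 0 with rfl | hP0
  · simp
  refine (degree_mul_le P R).trans_lt ?_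
  push_cast
  exact WithBot.add_lt_add_of_le_of_lt (degree_ne_bot.2 hP0) (degree_lt_add_one_iff.1 hP) hR

lemma exists_mem_polySeqLT_eq_sub {d : ℕ} {f : ℕ → ℝ} (hf : f ∈ polySeqLT d) (s : ℕ) :
    ∃ g ∈ polySeqLT d, ∀ k, s ≤ k → g k = f (k - s) := by
  obtain ⟨P, hP, hPf⟩ := mem_polySeqLT.1 hf
  refine ⟨fun k => (P.comp (X - C (s : ℝ))).eval (k : ℝ), mem_polySeqLT.2 ⟨_, ?_, fun k => rfl⟩,
    fun k hk => ?_⟩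
  · rwa [degree_comp (by rw [degree_X_sub_C]; exact zero_lt_one), degree_X_sub_C, mul_one]
  · simp [← hPf, Nat.cast_sub hk]

lemma fwdDiff_iter_zero {M G : Type*} [AddCommMonoid M] [AddCommGroup G] (h : M) (n : ℕ) :
    Δ_[h] ^[n] (0 : M → G) = 0 :=
  Function.iterate_fixed (fwdDiff_const h (0 : G)) n

lemma fwdDiff_iter_natCast_apply {R : Type*} [AddCommGroup R] (f : ℝ → R) (n j : ℕ) :
    Δ_[1] ^[n] (fun k : ℕ => f k) j = Δ_[1] ^[n] f (j : ℝ) := by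
  simp [fwdDiff_iter_eq_sum_shift]

lemma sum_range_eq_sum_range_of_eq_zero {M : Type*} [AddCommMonoid M] {f : ℕ → M} {a b : ℕ}
    (ha : ∀ i, a ≤ i → f i = 0) (hb : ∀ i, b ≤ i → f i = 0) :
    ∑ i ∈ range a, f i = ∑ i ∈ range b, f i := by
  wlog hab : a ≤ b generalizing a b
  · exact (this hb ha (le_of_not_ge hab)).symm
  exact sum_subset (range_subset_range.2 hab) fun i _ hi => ha i (by simpa using hi)

lemma fwdDiff_iter_eq_zero_of_mem_polySeqLT {d : ℕ} {f : ℕ → ℝ} (hf : f ∈ polySeqLT d) :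
    Δ_[1] ^[d] f = 0 := by
  obtain ⟨P, hP, hPf⟩ := mem_polySeqLT.1 hf
  obtain rfl : (fun k : ℕ => P.eval (k : ℝ)) = f := funext hPf
  rcases eq_or_ne P 0 with rfl | hP0
  · simp only [eval_zero]
    exact fwdDiff_iter_zero 1 d
  funext j
  rw [fwdDiff_iter_natCast_apply P.eval, fwdDiff_iter_eq_zero_of_degree_lt]
  · rfl
  · rwa [degree_eq_natDegree hP0, Nat.cast_lt] at hP

lemma mem_polySeqLT_of_fwdDiff_iter_eq_zero {d : ℕ} {f : ℕ → ℝ} (hf : Δ_[1] ^[d] f = 0) :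
    f ∈ polySeqLT d := by
  have newton : f = ∑ i ∈ range d, Δ_[1] ^[i] f 0 • fun k : ℕ => (k.choose i : ℝ) := by
    funext k
    have hvanish : ∀ i, d ≤ i → Δ_[1] ^[i] f 0 = 0 := fun i hi => by
      rw [← Nat.sub_add_cancel hi, Function.iterate_add_apply, hf, fwdDiff_iter_zero]
      rfl
    have h := shift_eq_sum_fwdDiff_iter 1 f k 0
    rw [zero_add, smul_eq_mul, mul_one] at h
    rw [h, sum_range_eq_sum_range_of_eq_zero (b := d)
      (fun i hi => by rw [Nat.choose_eq_zero_of_lt hi, zero_smul])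
      (fun i hi => by rw [hvanish i hi, smul_zero])]
    simp [Finset.sum_apply, mul_comm]
  rw [newton]
  exact sum_mem fun i hi => Submodule.smul_mem _ _ <|
    polySeqLT_mono (Nat.succ_le_of_lt (mem_range.1 hi)) (choose_mem_polySeqLT i)

lemma mem_polySeqLT_iff_fwdDiff_iter_eq_zero {d : ℕ} {f : ℕ → ℝ} :
    f ∈ polySeqLT d ↔ Δ_[1] ^[d] f = 0 :=
  ⟨fwdDiff_iter_eq_zero_of_mem_polySeqLT, mem_polySeqLT_of_fwdDiff_iter_eq_zero⟩

theorem Commute.add_pow_eq_sum_range_of_pow_eq_zero {A : Type*} [Semiring A] {a b : A} {n : ℕ}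
    (h : Commute a b) (hb : b ^ n = 0) (k : ℕ) :
    (a + b) ^ k = ∑ i ∈ range n, k.choose i • (a ^ (k - i) * b ^ i) := by
  rw [add_comm, h.symm.add_pow, sum_range_eq_sum_range_of_eq_zero (b := n)]
  · refine sum_congr rfl fun i _ => ?_
    rw [nsmul_eq_mul, Nat.cast_comm, (h.pow_pow _ _).eq]
  · intro i hi
    rw [Nat.choose_eq_zero_of_lt hi, Nat.cast_zero, mul_zero]
  · intro i hi
    rw [pow_eq_zero_of_le hi hb, zero_mul, zero_mul]

theorem norm_sq_sum_ofReal_smul {𝕜 E ι : Type*} [RCLike 𝕜] [NormedAddCommGroup E]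
    [InnerProductSpace 𝕜 E] (s : Finset ι) (c : ι → ℝ) (w : ι → E) :
    ‖∑ i ∈ s, (c i : 𝕜) • w i‖ ^ 2 = ∑ i ∈ s, ∑ j ∈ s, c i * c j * RCLike.re ⟪w i, w j⟫_𝕜 := by
  rw [← inner_self_eq_norm_sq (𝕜 := 𝕜), sum_inner, map_sum]
  refine sum_congr rfl fun i _ => ?_
  rw [inner_sum, map_sum]
  refine sum_congr rfl fun j _ => ?_
  rw [inner_smul_left, inner_smul_right, RCLike.conj_ofReal, ← mul_assoc, ← RCLike.ofReal_mul,
    RCLike.re_ofReal_mul]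

section Operator

variable {H : Type*} [NormedAddCommGroup H] [InnerProductSpace ℂ H]

lemma norm_sq_add_pow_apply_eq_sum {T Q : H →L[ℂ] H} {n : ℕ} (hcomm : Commute T Q)
    (hQ : Q ^ n = 0) (x : H) (k : ℕ) :
    ‖((T + Q) ^ k) x‖ ^ 2 = ∑ i ∈ range n, ∑ j ∈ range n, (k.choose i : ℝ) * k.choose j *
      (⟪(T ^ (k - i)) ((Q ^ i) x), (T ^ (k - j)) ((Q ^ j) x)⟫_ℂ).re := by
  have h := norm_sq_sum_ofReal_smul (𝕜 := ℂ) (range n) (fun i => (k.choose i : ℝ))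
    (fun i => (T ^ (k - i)) ((Q ^ i) x))
  simp only [RCLike.ofReal_natCast, Nat.cast_smul_eq_nsmul, RCLike.re_to_complex] at h
  rw [hcomm.add_pow_eq_sum_range_of_pow_eq_zero hQ k, _root_.sum_apply, ← h]
  simp only [smul_apply, mul_apply_eq_comp]

lemma isMIsometry_iff_fwdDiff_iter {m : ℕ} {T : H →L[ℂ] H} :
    IsMIsometry m T ↔ ∀ x, Δ_[1] ^[m] (fun k : ℕ => ‖(T ^ k) x‖ ^ 2) 0 = 0 := by
  simp [IsMIsometry, fwdDiff_iter_eq_sum_shift]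

lemma isMIsometry_iff_mem_polySeqLT {m : ℕ} {T : H →L[ℂ] H} :
    IsMIsometry m T ↔ ∀ x, (fun k : ℕ => ‖(T ^ k) x‖ ^ 2) ∈ polySeqLT m := by
  simp only [isMIsometry_iff_fwdDiff_iter, mem_polySeqLT_iff_fwdDiff_iter_eq_zero]
  refine ⟨fun hT x => funext fun j => ?_, fun hT x => congr_fun (hT x) 0⟩
  have h := fwdDiff_iter_comp_add 1 (fun k : ℕ => ‖(T ^ k) x‖ ^ 2) j m 0
  rw [zero_add] at h
  rw [← h]
  simpa [pow_add] using hT ((T ^ j) x)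

lemma IsMIsometry.re_inner_mem_polySeqLT {m : ℕ} {T : H →L[ℂ] H} (hT : IsMIsometry m T)
    (u v : H) : (fun k : ℕ => (⟪(T ^ k) u, (T ^ k) v⟫_ℂ).re) ∈ polySeqLT m := by
  have hnorm := isMIsometry_iff_mem_polySeqLT.1 hT
  have polarization : (fun k : ℕ => (⟪(T ^ k) u, (T ^ k) v⟫_ℂ).re) = (2 : ℝ)⁻¹ •
      ((fun k : ℕ => ‖(T ^ k) (u + v)‖ ^ 2) - (fun k : ℕ => ‖(T ^ k) u‖ ^ 2) -
        fun k : ℕ => ‖(T ^ k) v‖ ^ 2) := by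
    funext k
    simp only [Pi.smul_apply, Pi.sub_apply, smul_eq_mul, map_add]
    rw [← RCLike.re_to_complex,
      re_inner_eq_norm_add_mul_self_sub_norm_mul_self_sub_norm_mul_self_div_two]
    ring
  rw [polarization]
  exact Submodule.smul_mem _ _ (sub_mem (sub_mem (hnorm _) (hnorm u)) (hnorm v))

lemma IsMIsometry.choose_mul_choose_mul_re_inner_mem_polySeqLT {m : ℕ} {T : H →L[ℂ] H}
    (hT : IsMIsometry m T) (u v : H) (i j : ℕ) :
    (fun k : ℕ => (k.choose i : ℝ) * k.choose j * (⟪(T ^ (k - i)) u, (T ^ (k - j)) v⟫_ℂ).re) ∈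
      polySeqLT (i + j + m) := by
  set s := max i j
  obtain ⟨g, hg, hgs⟩ := exists_mem_polySeqLT_eq_sub
    (hT.re_inner_mem_polySeqLT ((T ^ (s - i)) u) ((T ^ (s - j)) v)) s
  have hchoose : (fun k : ℕ => (k.choose i : ℝ) * k.choose j) ∈ polySeqLT (i + j + 1) := by
    rw [add_assoc]
    exact mul_mem_polySeqLT (choose_mem_polySeqLT i) (choose_mem_polySeqLT j)
  convert mul_mem_polySeqLT hchoose hg using 1
  funext k
  rw [Pi.mul_apply]
  rcases le_or_gt s k with hk | hk
  · have hpow : ∀ l, l ≤ s → T ^ (k - s) * T ^ (s - l) = T ^ (k - l) := fun l hl => by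
      rw [← pow_add]; congr 1; omega
    rw [hgs k hk, ← mul_apply_eq_comp, ← mul_apply_eq_comp,
      hpow i (le_max_left i j), hpow j (le_max_right i j)]
  -- below `s` the truncated exponents are meaningless, but a binomial coefficient vanishes
  · rcases lt_max_iff.1 hk with hi | hj
    · simp [Nat.choose_eq_zero_of_lt hi]
    · simp [Nat.choose_eq_zero_of_lt hj]

end Operator

theorem stmt0_general {H : Type*} [NormedAddCommGroup H] [InnerProductSpace ℂ H]
    (m n : ℕ) (T Q : H →L[ℂ] H)
    (hT : IsMIsometry m T) (hQ : Q ^ n = 0) (hcomm : T * Q = Q * T) :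
    IsMIsometry (2 * n + m - 2) (T + Q) := by
  rw [isMIsometry_iff_mem_polySeqLT]
  intro x
  have expansion : (fun k : ℕ => ‖((T + Q) ^ k) x‖ ^ 2) = ∑ i ∈ range n, ∑ j ∈ range n,
      fun k : ℕ => (k.choose i : ℝ) * k.choose j *
        (⟪(T ^ (k - i)) ((Q ^ i) x), (T ^ (k - j)) ((Q ^ j) x)⟫_ℂ).re := by
    funext k
    simp only [Finset.sum_apply]
    exact norm_sq_add_pow_apply_eq_sum hcomm hQ x k
  rw [expansion]
  refine sum_mem fun i hi => sum_mem fun j hj => polySeqLT_mono ?_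
    (hT.choose_mul_choose_mul_re_inner_mem_polySeqLT _ _ i j)
  simp only [mem_range] at hi hj
  omega

theorem stmt0 {H : Type*} [NormedAddCommGroup H] [InnerProductSpace ℂ H] [CompleteSpace H]
    (m n : ℕ) (hm : 1 ≤ m) (hn : 1 ≤ n) (T Q : H →L[ℂ] H)
    (hT : IsMIsometry m T) (hQ : Q ^ n = 0) (hcomm : T * Q = Q * T) :
    IsMIsometry (2 * n + m - 2) (T + Q) :=
  stmt0_general m n T Q hT hQ hcomm
end

section
/- Every eigenvalue of an m-isometry on a Hilbert space has modulus at most 1; if moreover the m-isometry is invertible (e.g., on a finite dimensional space), every eigenvalue has modulus exactly 1. -/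
open scoped BigOperators

/-!
If `T x = λ x` then `‖T^k x‖² = (|λ|²)^k ‖x‖²`, so by the binomial theorem the defining sum
of an `m`-isometry evaluated at `x` is `(|λ|² - 1)^m ‖x‖²`. For `x ≠ 0` this forces `|λ| = 1`.
-/

namespace ContinuousLinearMap

theorem pow_apply_eq_pow_smul {R M : Type*} [Semiring R] [TopologicalSpace M]
    [AddCommMonoid M] [Module R M] (T : M →L[R] M) {c : R} {x : M} (hTx : T x = c • x)
    (k : ℕ) : (T ^ k) x = c ^ k • x := by
  induction k with
  | zero => simp
  | succ k ih => rw [pow_succ', mul_apply_eq_comp, ih, map_smul, hTx, smul_smul, pow_succ]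

end ContinuousLinearMap

theorem sum_choose_norm_pow_apply_sq_of_apply_eq_smul {𝕜 E : Type*} [NormedField 𝕜]
    [SeminormedAddCommGroup E] [NormedSpace 𝕜 E] {T : E →L[𝕜] E} {lam : 𝕜} {x : E}
    (hTx : T x = lam • x) (m : ℕ) :
    ∑ k ∈ Finset.range (m + 1), (-1 : ℝ) ^ (m - k) * (m.choose k) * ‖(T ^ k) x‖ ^ 2 =
      (‖lam‖ ^ 2 - 1) ^ m * ‖x‖ ^ 2 := by
  rw [sub_eq_add_neg, add_pow, Finset.sum_mul]
  refine Finset.sum_congr rfl fun k _ => ?_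
  rw [T.pow_apply_eq_pow_smul hTx, norm_smul, norm_pow]
  ring

theorem IsMIsometry.norm_eq_one_of_apply_eq_smul {H : Type*} [NormedAddCommGroup H]
    [InnerProductSpace ℂ H] {m : ℕ} {T : H →L[ℂ] H} {lam : ℂ} {x : H} (hT : IsMIsometry m T)
    (hx : x ≠ 0) (hTx : T x = lam • x) : ‖lam‖ = 1 := by
  have hpow : (‖lam‖ ^ 2 - 1) ^ m * ‖x‖ ^ 2 = 0 := by
    rw [← sum_choose_norm_pow_apply_sq_of_apply_eq_smul hTx]
    exact hT x
  have hsq : ‖lam‖ ^ 2 = 1 :=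
    sub_eq_zero.mp (pow_eq_zero_iff'.mp ((mul_eq_zero.mp hpow).resolve_right (by positivity))).1
  exact (pow_left_inj₀ (norm_nonneg lam) zero_le_one two_ne_zero).mp (hsq.trans (one_pow 2).symm)

theorem stmt4_general {H : Type*} [NormedAddCommGroup H] [InnerProductSpace ℂ H]
    (m : ℕ) (T : H →L[ℂ] H) (hT : IsMIsometry m T)
    (lam : ℂ) (x : H) (hx : x ≠ 0) (hTx : T x = lam • x) :
    ‖lam‖ ≤ 1 ∧ (IsUnit T → ‖lam‖ = 1) := by
  have hnorm : ‖lam‖ = 1 := hT.norm_eq_one_of_apply_eq_smul hx hTx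
  exact ⟨hnorm.le, fun _ => hnorm⟩

theorem stmt4 {H : Type*} [NormedAddCommGroup H] [InnerProductSpace ℂ H] [CompleteSpace H]
    (m : ℕ) (hm : 1 ≤ m) (T : H →L[ℂ] H) (hT : IsMIsometry m T)
    (lam : ℂ) (x : H) (hx : x ≠ 0) (hTx : T x = lam • x) :
    ‖lam‖ ≤ 1 ∧ (IsUnit T → ‖lam‖ = 1) :=
  stmt4_general m T hT lam x hx hTx
end

section
/- On a Hilbert space of dimension n, every (2n)-isometry is a (2n-1)-isometry; more generally any invertible (2ℓ)-isometry is a (2ℓ-1)-isometry. -/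
/-!
For invertible `T` and a vector `x`, the sequence `a j = ‖T ^ j x‖ ^ 2`, `j ∈ ℤ`, is nonnegative,
and `T` is an `m`-isometry exactly when the `m`-th forward differences of all such sequences vanish.
If the `(m + 1)`-st differences vanish, the `m`-th difference of `a` is a constant `c`, and `c < 0`
would force `a j → -∞` as `j → ∞`. The reflected sequence `j ↦ a (-j)` has `m`-th difference
`(-1) ^ m * c`, so for odd `m` also `c > 0` is impossible. In finite dimension an `m`-isometry is
injective, hence invertible.
-/

open scoped BigOperators

open Filter Finset fwdDiff

lemma eq_apply_zero_of_fwdDiff_eq_zero {f : ℤ → ℝ} (h : ∀ j, Δ_[1] f j = 0) (j : ℤ) :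
    f j = f 0 := by
  have step (i : ℤ) : f (i + 1) = f i := sub_eq_zero.1 (h i)
  induction j using Int.induction_on with
  | zero => rfl
  | succ i ih => rw [step, ih]
  | pred i ih => rw [← ih, ← step, sub_add_cancel]

lemma tendsto_atBot_of_fwdDiff_le {f : ℤ → ℝ} {ε : ℝ} (hε : 0 < ε)
    (h : ∀ᶠ n : ℕ in atTop, Δ_[1] f n ≤ -ε) :
    Tendsto (fun n : ℕ => f n) atTop atBot := by
  obtain ⟨N, hN⟩ := eventually_atTop.1 h
  have hbound (k : ℕ) : f ↑(k + N) ≤ f N + -ε * k := by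
    induction k with
    | zero => simp
    | succ k ih =>
      have := hN (k + N) (by omega)
      simp only [fwdDiff, Nat.cast_add] at this ih ⊢
      push_cast
      rw [add_right_comm (k : ℤ)]
      linarith
  refine (tendsto_add_atTop_iff_nat N).1 (tendsto_atBot_mono (fun k => hbound k) ?_)
  exact tendsto_atBot_add_const_left _ _
    (tendsto_natCast_atTop_atTop.const_mul_atTop_of_neg (neg_lt_zero.2 hε))

lemma tendsto_atBot_of_fwdDiff_iter_le {f : ℤ → ℝ} {ε : ℝ} (hε : 0 < ε) (m : ℕ)
    (h : ∀ᶠ n : ℕ in atTop, (Δ_[1])^[m + 1] f n ≤ -ε) :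
    Tendsto (fun n : ℕ => f n) atTop atBot := by
  induction m generalizing f with
  | zero => exact tendsto_atBot_of_fwdDiff_le hε h
  | succ m ih =>
    rw [Function.iterate_succ_apply] at h
    exact tendsto_atBot_of_fwdDiff_le one_pos ((ih h).eventually_le_atBot (-1))

lemma fwdDiff_iter_nonneg_of_nonneg {f : ℤ → ℝ} (hf : ∀ n : ℕ, 0 ≤ f n) {m : ℕ}
    (h : ∀ j, (Δ_[1])^[m + 1] f j = 0) : 0 ≤ (Δ_[1])^[m] f 0 := by
  cases m with
  | zero => exact hf 0
  | succ m =>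
    by_contra! hneg
    have hconst := eq_apply_zero_of_fwdDiff_eq_zero (f := (Δ_[1])^[m + 1] f)
      (by simpa only [Function.iterate_succ_apply'] using h)
    have hlim := tendsto_atBot_of_fwdDiff_iter_le (neg_pos.2 hneg) m
      (.of_forall fun n => (hconst n).trans_le (neg_neg _).ge)
    obtain ⟨n, hn⟩ := (hlim.eventually_lt_atBot 0).exists
    exact (hf n).not_gt hn

lemma fwdDiff_iter_comp_neg (f : ℤ → ℝ) (m : ℕ) (j : ℤ) :
    (Δ_[1])^[m] (fun i => f (-i)) j = (-1) ^ m * (Δ_[1])^[m] f (-j - m) := by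
  induction m generalizing j with
  | zero => simp
  | succ m ih =>
    rw [Function.iterate_succ_apply', fwdDiff, ih, ih, Function.iterate_succ_apply', fwdDiff,
      show -(j + 1) - m = -j - ↑(m + 1) by push_cast; ring,
      show -j - m = -j - ↑(m + 1) + 1 by push_cast; ring]
    ring

lemma fwdDiff_iter_eq_zero_of_nonneg_of_odd {f : ℤ → ℝ} (hf : ∀ j, 0 ≤ f j) {m : ℕ}
    (hm : Odd m) (h : ∀ j, (Δ_[1])^[m + 1] f j = 0) : (Δ_[1])^[m] f 0 = 0 := by
  have hconst := eq_apply_zero_of_fwdDiff_eq_zero (f := (Δ_[1])^[m] f)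
    (by simpa only [Function.iterate_succ_apply'] using h)
  have hfwd := fwdDiff_iter_nonneg_of_nonneg (fun n => hf n) h
  have hbwd := fwdDiff_iter_nonneg_of_nonneg (f := fun i => f (-i)) (fun n => hf _)
    (fun j => by rw [fwdDiff_iter_comp_neg, h, mul_zero])
  rw [fwdDiff_iter_comp_neg, hm.neg_one_pow, hconst] at hbwd
  linarith

section

variable {H : Type*} [NormedAddCommGroup H] [InnerProductSpace ℂ H] {m : ℕ} {T : H →L[ℂ] H}

lemma fwdDiff_iter_norm_sq_zpow (u : (H →L[ℂ] H)ˣ) (x : H) (m : ℕ) (j : ℤ) :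
    (Δ_[1])^[m] (fun i : ℤ => ‖(↑(u ^ i) : H →L[ℂ] H) x‖ ^ 2) j =
      ∑ k ∈ range (m + 1), (-1 : ℝ) ^ (m - k) * m.choose k *
        ‖((u : H →L[ℂ] H) ^ k) ((↑(u ^ j) : H →L[ℂ] H) x)‖ ^ 2 := by
  rw [fwdDiff_iter_eq_sum_shift]
  refine sum_congr rfl fun k _ => ?_
  rw [add_comm, nsmul_one, zpow_add, zpow_natCast, Units.val_mul, Units.val_pow_eq_pow_val,
    zsmul_eq_mul]
  push_cast
  rfl

lemma IsMIsometry.of_succ_of_odd_of_isUnit (hT : IsUnit T) (hm : Odd m)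
    (h : IsMIsometry (m + 1) T) : IsMIsometry m T := by
  obtain ⟨u, rfl⟩ := hT
  intro x
  have := fwdDiff_iter_eq_zero_of_nonneg_of_odd (fun _ => sq_nonneg _) hm
    (fun j => (fwdDiff_iter_norm_sq_zpow u x _ j).trans (h _))
  rwa [fwdDiff_iter_norm_sq_zpow, zpow_zero, Units.val_one, one_apply_eq_self] at this

lemma IsMIsometry.injective (h : IsMIsometry m T) : Function.Injective T := by
  refine (injective_iff_map_eq_zero T).2 fun x hx => ?_
  have hsum := h x
  rw [sum_eq_single 0 (fun k _ hk => ?_) (by simp)] at hsum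
  · simpa using hsum
  · obtain ⟨k, rfl⟩ := Nat.exists_eq_succ_of_ne_zero hk
    simp [pow_succ, hx]

lemma IsMIsometry.isUnit [FiniteDimensional ℂ H] (h : IsMIsometry m T) : IsUnit T :=
  have := FiniteDimensional.complete ℂ H
  T.isUnit_iff_bijective.2
    ⟨h.injective, LinearMap.injective_iff_surjective (f := (T : H →ₗ[ℂ] H)).1 h.injective⟩

lemma IsMIsometry.of_two_mul_of_isUnit {l : ℕ} (hl : 1 ≤ l) (hT : IsUnit T)
    (h : IsMIsometry (2 * l) T) : IsMIsometry (2 * l - 1) T :=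
  .of_succ_of_odd_of_isUnit hT ⟨l - 1, by omega⟩ (by rwa [Nat.sub_add_cancel (by omega)])

end

theorem stmt5 :
    (∀ (H : Type) (_ : NormedAddCommGroup H) (_ : InnerProductSpace ℂ H)
      (n : ℕ), 1 ≤ n → FiniteDimensional ℂ H → Module.finrank ℂ H = n →
      ∀ T : H →L[ℂ] H, IsMIsometry (2 * n) T → IsMIsometry (2 * n - 1) T) ∧
    (∀ (H : Type) (_ : NormedAddCommGroup H) (_ : InnerProductSpace ℂ H),
      CompleteSpace H →
      ∀ (l : ℕ), 1 ≤ l → ∀ T : H →L[ℂ] H, IsUnit T → IsMIsometry (2 * l) T →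
      IsMIsometry (2 * l - 1) T) :=
  ⟨fun _ _ _ _ hn _ _ _ hT => hT.of_two_mul_of_isUnit hn hT.isUnit,
    fun _ _ _ _ _ hl _ hu hT => hT.of_two_mul_of_isUnit hl hu⟩
end

section
/- Any strict (2k-1)-isometry on ℂⁿ with 2 ≤ k ≤ n has at most n-1 distinct eigenvalues. -/
/-!
If `T` has at least `n = dim H` distinct eigenvalues, pick a unit eigenvector for each. The
polarized `m`-isometry identity gives `(conj λ * μ - 1)^m ⟪x, y⟫ = 0` for eigenvectors `x`, `y`
with eigenvalues `λ`, `μ`; hence eigenvalues are unimodular and eigenvectors for distinct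
eigenvalues are orthogonal. So the chosen vectors form an orthonormal basis that `T` maps to an
orthonormal family, i.e. `T` is an isometry, and an isometry is an `m`-isometry for every `m ≥ 1`,
in particular for `m = 2k - 2 ≥ 2`.
-/

open scoped BigOperators

open Finset Module

local notation "⟪" x ", " y "⟫" => @inner ℂ _ _ x y

theorem Set.exists_finset_subset_card_eq {α : Type*} {s : Set α} {n : ℕ} (h : n ≤ s.ncard) :
    ∃ t : Finset α, ↑t ⊆ s ∧ t.card = n := by
  rcases s.finite_or_infinite with hs | hs
  · rw [Set.ncard_eq_toFinset_card s hs] at h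
    obtain ⟨t, hts, htn⟩ := Finset.exists_subset_card_eq h
    exact ⟨t, by simpa using hts, htn⟩
  · exact hs.exists_subset_card_eq n

section

variable {H : Type*} [NormedAddCommGroup H] [InnerProductSpace ℂ H] {m : ℕ} {T : H →L[ℂ] H}

theorem ContinuousLinearMap.pow_apply_eq_pow_smul_s14 {lam : ℂ} {x : H} (hx : T x = lam • x) (j : ℕ) :
    (T ^ j) x = lam ^ j • x := by
  induction j with
  | zero => simp
  | succ j ih => rw [pow_succ', mul_apply_eq_comp, ih, map_smul, hx, smul_smul, pow_succ]

theorem IsMIsometry.of_norm_map (hm : m ≠ 0) (hT : ∀ x, ‖T x‖ = ‖x‖) : IsMIsometry m T := by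
  have hpow : ∀ j x, ‖(T ^ j) x‖ = ‖x‖ := by
    intro j
    induction j with
    | zero => simp
    | succ j ih => intro x; rw [pow_succ, mul_apply_eq_comp, ih, hT]
  intro x
  calc ∑ j ∈ range (m + 1), (-1 : ℝ) ^ (m - j) * m.choose j * ‖(T ^ j) x‖ ^ 2
      = (1 + (-1 : ℝ)) ^ m * ‖x‖ ^ 2 := by
        rw [add_pow, sum_mul]
        refine sum_congr rfl fun j _ => ?_
        rw [hpow]
        ring
    _ = 0 := by simp [hm]

namespace IsMIsometry

/-- The operator `∑ ±C(m,j) T*ʲ Tʲ` vanishes because its quadratic form does, and over `ℂ` an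
operator is determined by its quadratic form. -/
theorem sum_inner_pow_apply_eq_zero [CompleteSpace H] (h : IsMIsometry m T) (x y : H) :
    ∑ j ∈ range (m + 1), ((-1 : ℂ) ^ (m - j) * m.choose j) * ⟪(T ^ j) x, (T ^ j) y⟫ = 0 := by
  set c : ℕ → ℂ := fun j => (-1 : ℂ) ^ (m - j) * m.choose j
  set S : H →ₗ[ℂ] H := ∑ j ∈ range (m + 1),
    c j • ((ContinuousLinearMap.adjoint (T ^ j)).comp (T ^ j) : H →L[ℂ] H).toLinearMap
  have hS_inner : ∀ x y, ⟪x, S y⟫ = ∑ j ∈ range (m + 1), c j * ⟪(T ^ j) x, (T ^ j) y⟫ := by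
    intro x y
    simp only [S, LinearMap.sum_apply, inner_sum, LinearMap.smul_apply, inner_smul_right,
      ContinuousLinearMap.coe_coe, ContinuousLinearMap.comp_apply,
      ContinuousLinearMap.adjoint_inner_right]
  have hS : S = 0 := by
    rw [← inner_map_self_eq_zero]
    intro z
    rw [← inner_conj_symm, hS_inner, ← map_zero (starRingEnd ℂ)]
    congr 1
    rw [← Complex.ofReal_zero, ← h z, Complex.ofReal_sum]
    refine sum_congr rfl fun j _ => ?_
    simp [c, inner_self_eq_norm_sq_to_K]
  rw [← hS_inner, hS, LinearMap.zero_apply, inner_zero_right]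

theorem conj_mul_sub_one_pow_mul_inner_eq_zero [CompleteSpace H] (h : IsMIsometry m T) {lam mu : ℂ} {x y : H}
    (hx : T x = lam • x) (hy : T y = mu • y) :
    (starRingEnd ℂ lam * mu - 1) ^ m * ⟪x, y⟫ = 0 := by
  rw [← h.sum_inner_pow_apply_eq_zero x y, sub_eq_add_neg, add_pow, sum_mul]
  refine sum_congr rfl fun j _ => ?_
  rw [ContinuousLinearMap.pow_apply_eq_pow_smul_s14 hx, ContinuousLinearMap.pow_apply_eq_pow_smul_s14 hy,
    inner_smul_left, inner_smul_right, map_pow]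
  ring

theorem conj_mul_eq_one_of_inner_ne_zero [CompleteSpace H] (h : IsMIsometry m T) (hm : m ≠ 0)
    {lam mu : ℂ} {x y : H} (hx : T x = lam • x) (hy : T y = mu • y) (hxy : ⟪x, y⟫ ≠ 0) :
    starRingEnd ℂ lam * mu = 1 :=
  sub_eq_zero.1 <| (pow_eq_zero_iff hm).1 <|
    (mul_eq_zero.1 (h.conj_mul_sub_one_pow_mul_inner_eq_zero hx hy)).resolve_right hxy

theorem norm_eigenvalue_eq_one [CompleteSpace H] (h : IsMIsometry m T) (hm : m ≠ 0) {lam : ℂ} {x : H}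
    (hx0 : x ≠ 0) (hx : T x = lam • x) : ‖lam‖ = 1 := by
  have hlam := h.conj_mul_eq_one_of_inner_ne_zero hm hx hx (inner_self_ne_zero.2 hx0)
  rw [Complex.conj_mul'] at hlam
  exact (pow_eq_one_iff_of_nonneg (norm_nonneg lam) two_ne_zero).1 (mod_cast hlam)

theorem inner_eq_zero_of_eigenvalue_ne [CompleteSpace H] (h : IsMIsometry m T) (hm : m ≠ 0)
    {lam mu : ℂ} {x y : H} (hx : T x = lam • x) (hy : T y = mu • y) (hne : lam ≠ mu) :
    ⟪x, y⟫ = 0 := by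
  by_contra hxy
  have hx0 : ⟪x, x⟫ ≠ 0 := inner_self_ne_zero.2 fun hx0 => hxy (by simp [hx0])
  have hlam := h.conj_mul_eq_one_of_inner_ne_zero hm hx hx hx0
  have hlam_mu := h.conj_mul_eq_one_of_inner_ne_zero hm hx hy hxy
  exact hne (mul_left_cancel₀ (left_ne_zero_of_mul_eq_one hlam) (hlam.trans hlam_mu.symm))

theorem orthonormal_of_eigenvectors [CompleteSpace H] (h : IsMIsometry m T) (hm : m ≠ 0)
    {ι : Type*} {v : ι → H} {lam : ι → ℂ} (hlam : Function.Injective lam) (hv : ∀ i, ‖v i‖ = 1)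
    (hTv : ∀ i, T (v i) = lam i • v i) : Orthonormal ℂ v :=
  ⟨hv, fun i j hij => h.inner_eq_zero_of_eigenvalue_ne hm (hTv i) (hTv j) (hlam.ne hij)⟩

theorem norm_map_of_eigenvectors [FiniteDimensional ℂ H] (h : IsMIsometry m T) (hm : m ≠ 0)
    {ι : Type*} [Fintype ι] (hcard : Fintype.card ι = finrank ℂ H) {v : ι → H} {lam : ι → ℂ}
    (hlam : Function.Injective lam) (hv : ∀ i, ‖v i‖ = 1) (hTv : ∀ i, T (v i) = lam i • v i)
    (x : H) : ‖T x‖ = ‖x‖ := by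
  have hon := h.orthonormal_of_eigenvectors hm hlam hv hTv
  set b := basisOfLinearIndependentOfCardEqFinrank' v hon.linearIndependent hcard
  have hTon : Orthonormal ℂ (T.toLinearMap ∘ b) := by
    rw [coe_basisOfLinearIndependentOfCardEqFinrank']
    refine h.orthonormal_of_eigenvectors hm hlam (fun i => ?_) (fun i => by simp [hTv])
    rw [Function.comp_apply, ContinuousLinearMap.coe_coe, hTv, norm_smul, hv,
      h.norm_eigenvalue_eq_one hm _ (hTv i), mul_one]
    exact norm_ne_zero_iff.1 (by simp [hv])
  have hbon : Orthonormal ℂ b := by rwa [coe_basisOfLinearIndependentOfCardEqFinrank']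
  exact (T.toLinearMap.isometryOfOrthonormal hbon hTon).norm_map x

theorem norm_map_of_finrank_le_ncard_eigenvalues [FiniteDimensional ℂ H] (h : IsMIsometry m T)
    (hm : m ≠ 0) (hT : finrank ℂ H ≤ {lam : ℂ | ∃ x : H, x ≠ 0 ∧ T x = lam • x}.ncard) (x : H) :
    ‖T x‖ = ‖x‖ := by
  obtain ⟨t, hts, htcard⟩ := Set.exists_finset_subset_card_eq hT
  choose v hv0 hTv using fun lam : t => hts lam.2
  refine h.norm_map_of_eigenvectors hm (by simpa using htcard) Subtype.val_injective
    (v := fun lam => (‖v lam‖⁻¹ : ℂ) • v lam) (fun lam => norm_smul_inv_norm (hv0 lam))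
    (fun lam => by rw [map_smul, hTv, smul_comm]) x

end IsMIsometry

end

theorem stmt14_general (n k : ℕ) (hk : 2 ≤ k)
    (T : EuclideanSpace ℂ (Fin n) →L[ℂ] EuclideanSpace ℂ (Fin n))
    (h1 : IsMIsometry (2 * k - 1) T) (h2 : ¬ IsMIsometry (2 * k - 2) T) :
    {lam : ℂ | ∃ x : EuclideanSpace ℂ (Fin n), x ≠ 0 ∧ T x = lam • x}.ncard ≤ n - 1 := by
  by_contra! hlt
  refine h2 (.of_norm_map (by omega) ?_)
  exact h1.norm_map_of_finrank_le_ncard_eigenvalues (by omega)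
    (by simpa using Nat.le_of_pred_lt hlt)

theorem stmt14 (n k : ℕ) (hk : 2 ≤ k) (hkn : k ≤ n)
    (T : EuclideanSpace ℂ (Fin n) →L[ℂ] EuclideanSpace ℂ (Fin n))
    (h1 : IsMIsometry (2 * k - 1) T) (h2 : ¬ IsMIsometry (2 * k - 2) T) :
    {lam : ℂ | ∃ x : EuclideanSpace ℂ (Fin n), x ≠ 0 ∧ T x = lam • x}.ncard ≤ n - 1 :=
  stmt14_general n k hk T h1 h2
end

section
/- If T is an n-isometry on ℂⁿ that is diagonalizable with n distinct eigenvalues, then T is unitary (i.e., an isometry). -/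
/-!
Polarizing the defining identity gives `∑ₖ (-1)^(m-k) C(m,k) ⟪Tᵏx, Tᵏy⟫ = 0`. For eigenvectors
`T x = a • x`, `T y = b • y` the left side is `(conj a * b - 1)^m ⟪x, y⟫`. Taking `y = x` gives
`|a| = 1`, hence `conj a * b ≠ 1` whenever `a ≠ b`, so eigenvectors to distinct eigenvalues are
orthogonal. The `n` normalized eigenvectors thus form an orthonormal basis of `ℂⁿ` on which `T`
acts by unimodular scalars, and such an operator preserves norms.
-/

open scoped BigOperators

open Finset
open scoped ComplexConjugate InnerProductSpace

theorem sum_range_neg_one_pow_mul_choose_mul_pow {R : Type*} [CommRing R] (w : R) (m : ℕ) :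
    ∑ k ∈ range (m + 1), (-1) ^ (m - k) * (m.choose k : R) * w ^ k = (w - 1) ^ m := by
  rw [sub_eq_add_neg, add_pow]
  exact sum_congr rfl fun k _ => by ring

theorem ContinuousLinearMap.pow_apply_of_apply_eq_smul {R M : Type*} [CommSemiring R]
    [AddCommMonoid M] [Module R M] [TopologicalSpace M] {T : M →L[R] M} {a : R} {x : M}
    (hx : T x = a • x) (k : ℕ) : (T ^ k) x = a ^ k • x := by
  induction k with
  | zero => simp
  | succ k ih =>
    rw [pow_succ, mul_apply_eq_comp, hx, map_smul, ih, smul_smul, pow_succ']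

namespace IsMIsometry

variable {H : Type*} [NormedAddCommGroup H] [InnerProductSpace ℂ H] {m : ℕ} {T : H →L[ℂ] H}

theorem sum_inner_eq_zero (hT : IsMIsometry m T) (x y : H) :
    ∑ k ∈ range (m + 1), ((-1) ^ (m - k) * m.choose k : ℂ) * ⟪(T ^ k) x, (T ^ k) y⟫_ℂ = 0 := by
  have hTc : ∀ z, ∑ k ∈ range (m + 1),
      ((-1) ^ (m - k) * m.choose k : ℂ) * (‖(T ^ k) z‖ : ℂ) ^ 2 = 0 := fun z => by
    exact_mod_cast hT z
  -- polarization writes each inner product through four squared norms, each killed by `hTc`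
  simp only [inner_eq_sum_norm_sq_div_four, ← map_add, ← map_sub, ← map_smul, mul_div_assoc',
    mul_add, mul_sub, ← mul_assoc, ← sum_div, sum_add_distrib, sum_sub_distrib, ← sum_mul,
    RCLike.I_to_complex, Complex.coe_algebraMap]
  rw [hTc, hTc, hTc, hTc]
  simp

variable {a b : ℂ} {x y : H}

theorem pow_sub_one_mul_inner_eq_zero (hT : IsMIsometry m T) (hx : T x = a • x)
    (hy : T y = b • y) : (conj a * b - 1) ^ m * ⟪x, y⟫_ℂ = 0 := by
  rw [← sum_range_neg_one_pow_mul_choose_mul_pow, sum_mul, ← hT.sum_inner_eq_zero x y]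
  refine sum_congr rfl fun k _ => ?_
  rw [T.pow_apply_of_apply_eq_smul hx, T.pow_apply_of_apply_eq_smul hy, inner_smul_left,
    inner_smul_right, map_pow, mul_pow]
  ring

theorem norm_eq_one_of_apply_eq_smul_s15 (hT : IsMIsometry m T) (hm : m ≠ 0) (hx0 : x ≠ 0)
    (hx : T x = a • x) : ‖a‖ = 1 := by
  have h := hT.pow_sub_one_mul_inner_eq_zero hx hx
  rw [mul_eq_zero, pow_eq_zero_iff hm, sub_eq_zero, Complex.conj_mul'] at h
  have ha : ‖a‖ ^ 2 = 1 := by exact_mod_cast h.resolve_right (inner_self_ne_zero.mpr hx0)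
  exact (pow_eq_one_iff_of_nonneg (norm_nonneg a) two_ne_zero).mp ha

theorem inner_eq_zero_of_apply_eq_smul (hT : IsMIsometry m T) (hm : m ≠ 0) (hx : T x = a • x)
    (hy : T y = b • y) (hab : a ≠ b) : ⟪x, y⟫_ℂ = 0 := by
  rcases eq_or_ne x 0 with rfl | hx0
  · exact inner_zero_left y
  have ha : a * conj a = 1 := by
    rw [Complex.mul_conj', hT.norm_eq_one_of_apply_eq_smul_s15 hm hx0 hx]; simp
  have hw : conj a * b - 1 ≠ 0 := fun h => hab <| by
    rw [← one_mul b, ← ha, mul_assoc, sub_eq_zero.mp h, mul_one]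
  exact (mul_eq_zero.mp (hT.pow_sub_one_mul_inner_eq_zero hx hy)).resolve_left (pow_ne_zero m hw)

end IsMIsometry

namespace OrthonormalBasis

variable {ι 𝕜 E : Type*} [Fintype ι] [RCLike 𝕜] [NormedAddCommGroup E] [InnerProductSpace 𝕜 E]
  (b : OrthonormalBasis ι 𝕜 E) {F : Type*} [FunLike F E E] [LinearMapClass F 𝕜 E E] {T : F}
  {μ : ι → 𝕜}

theorem inner_apply_of_apply_eq_smul (hT : ∀ i, T (b i) = μ i • b i) (x : E) (i : ι) :
    ⟪b i, T x⟫_𝕜 = μ i * ⟪b i, x⟫_𝕜 := by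
  conv_lhs => rw [← b.sum_repr' x]
  simp only [map_sum, map_smul, hT, smul_smul, b.orthonormal.inner_right_fintype]
  ring

theorem norm_apply_eq_of_apply_eq_smul (hT : ∀ i, T (b i) = μ i • b i) (hμ : ∀ i, ‖μ i‖ = 1)
    (x : E) : ‖T x‖ = ‖x‖ := by
  have h : ‖T x‖ ^ 2 = ‖x‖ ^ 2 := by
    simp only [← b.sum_sq_norm_inner_right, b.inner_apply_of_apply_eq_smul hT, norm_mul, hμ,
      one_mul]
  exact (pow_left_inj₀ (norm_nonneg _) (norm_nonneg _) two_ne_zero).mp h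

end OrthonormalBasis

theorem stmt15_general (n : ℕ)
    (T : EuclideanSpace ℂ (Fin n) →L[ℂ] EuclideanSpace ℂ (Fin n))
    (hT : IsMIsometry n T)
    (lam : Fin n → ℂ) (v : Fin n → EuclideanSpace ℂ (Fin n))
    (hlam : Function.Injective lam)
    (hv : ∀ i, v i ≠ 0 ∧ T (v i) = lam i • v i) :
    ∀ x, ‖T x‖ = ‖x‖ := by
  have horth : Pairwise fun i j => ⟪v i, v j⟫_ℂ = 0 := fun i j hij =>
    hT.inner_eq_zero_of_apply_eq_smul i.pos.ne' (hv i).2 (hv j).2 (hlam.ne hij)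
  have hdim : Module.finrank ℂ (EuclideanSpace ℂ (Fin n)) = Fintype.card (Fin n) :=
    finrank_euclideanSpace
  let b := InnerProductSpace.gramSchmidtOrthonormalBasis hdim v
  have hb : ∀ i, T (b i) = lam i • b i := fun i => by
    rw [InnerProductSpace.gramSchmidtOrthonormalBasis_apply_of_orthogonal hdim horth (hv i).1,
      map_smul, (hv i).2, smul_comm]
  exact b.norm_apply_eq_of_apply_eq_smul hb
    fun i => hT.norm_eq_one_of_apply_eq_smul_s15 i.pos.ne' (hv i).1 (hv i).2

theorem stmt15 (n : ℕ) (hn : 1 ≤ n)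
    (T : EuclideanSpace ℂ (Fin n) →L[ℂ] EuclideanSpace ℂ (Fin n))
    (hT : IsMIsometry n T)
    (lam : Fin n → ℂ) (v : Fin n → EuclideanSpace ℂ (Fin n))
    (hlam : Function.Injective lam)
    (hv : ∀ i, v i ≠ 0 ∧ T (v i) = lam i • v i) :
    ∀ x, ‖T x‖ = ‖x‖ :=
  stmt15_general n T hT lam v hlam hv
end
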